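/- Let G = (V,E) be a graph with an edge dominating set of size k, and let G' be obtained from G by adding a new vertex u adjacent to all of V, and attaching |V| + 2 new leaves to u. Then G has an edge dominating set of size k if and only if G' has a mixed dominating set of size k + 1. -/

import Mathlib

variable {V : Type*} [Fintype V] [DecidableEq V]

/-- The set of endpoints of an edge set `M`, i.e. `V(M)`. -/
def mVerts (M : Finset (Sym2 V)) : Finset V :=
  Finset.univ.filter fun v => ∃ e ∈ M, v ∈ e

/-- `D ∪ M` is a mixed dominating set of `G`: every vertex outside `D ∪ V(M)` has a
neighbor in `D`, and every edge outside `M` has an endpoint in `D ∪ V(M)`. -/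
def IsMDS (G : SimpleGraph V) (D : Finset V) (M : Finset (Sym2 V)) : Prop :=
  (∀ e ∈ M, e ∈ G.edgeSet) ∧
  (∀ v : V, v ∉ D → v ∉ mVerts M → ∃ u ∈ D, G.Adj u v) ∧
  (∀ e ∈ G.edgeSet, e ∉ M → ∃ v, v ∈ e ∧ (v ∈ D ∨ v ∈ mVerts M))

/-- `M` is an edge dominating set of `G`: every edge shares an endpoint with some
edge of `M`. -/
def IsEDS (G : SimpleGraph V) (M : Finset (Sym2 V)) : Prop :=
  (∀ e ∈ M, e ∈ G.edgeSet) ∧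
  ∀ e ∈ G.edgeSet, ∃ f ∈ M, ∃ v : V, v ∈ e ∧ v ∈ f

/-- The graph `G'` obtained from `G` by adding a new universal vertex `u`
(`Sum.inr (Sum.inl ())`) adjacent to all of `V` and attaching `|V| + 2` new leaves
to `u`. -/
def extG (G : SimpleGraph V) : SimpleGraph (V ⊕ (Unit ⊕ Fin (Fintype.card V + 2))) :=
  SimpleGraph.fromRel fun x y =>
    (∃ a b, x = Sum.inl a ∧ y = Sum.inl b ∧ G.Adj a b) ∨ x = Sum.inr (Sum.inl ())

/-!
If `M` dominates the edges of `G`, then the hub `u` together with the copy of `M` is a mixed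
dominating set of `G'`.

Conversely let `D ∪ M'` be a mixed dominating set of `G'` of size at most `k + 1`. If `|V| ≤ k`,
one edge at every non-isolated vertex of `G` already dominates all edges. Otherwise `u ∈ D`:
else every one of the `|V| + 2` leaves lies in `D` or its pendant edge lies in `M'`, which costs
more than `k + 1`. Every edge of `G` then has an endpoint that lies in `D`, on a copied edge of
`M'`, or on a spoke `s(u, a)` of `M'`. The copied edges of `M'`, together with one edge of `G` at
each endpoint of the first and third kind, form an edge dominating set of size at most
`|D| - 1 + |M'| ≤ k`.
-/

lemma card_filter_comp_mem_le {α β : Type*} [Fintype α] [DecidableEq β] {f : α → β}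
    (hf : Function.Injective f) (s : Finset β) :
    (Finset.univ.filter fun a => f a ∈ s).card ≤ s.card :=
  Finset.card_le_card_of_injOn f (fun _ ha => (Finset.mem_filter.mp ha).2) hf.injOn

section

omit [DecidableEq V]

variable {G : SimpleGraph V}

abbrev ExtV (V : Type*) [Fintype V] := V ⊕ (Unit ⊕ Fin (Fintype.card V + 2))

def hub (V : Type*) [Fintype V] : ExtV V := Sum.inr (Sum.inl ())

def leaf (ℓ : Fin (Fintype.card V + 2)) : ExtV V := Sum.inr (Sum.inr ℓ)

@[simp] lemma inl_ne_hub (a : V) : (Sum.inl a : ExtV V) ≠ hub V := Sum.inl_ne_inr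

@[simp] lemma leaf_ne_hub (ℓ : Fin (Fintype.card V + 2)) : leaf ℓ ≠ hub V := by
  simp [leaf, hub]

lemma leaf_injective : Function.Injective (leaf : Fin (Fintype.card V + 2) → ExtV V) := by
  intro ℓ ℓ' h
  simpa [leaf] using h

lemma extG_adj {x y : ExtV V} :
    (extG G).Adj x y ↔ x ≠ y ∧
      ((∃ a b, x = Sum.inl a ∧ y = Sum.inl b ∧ G.Adj a b) ∨ x = hub V ∨ y = hub V) := by
  simp only [extG, SimpleGraph.fromRel_adj, hub]
  constructor
  · rintro ⟨hne, (⟨a, b, rfl, rfl, hab⟩ | rfl) | (⟨a, b, rfl, rfl, hab⟩ | rfl)⟩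
    exacts [⟨hne, .inl ⟨a, b, rfl, rfl, hab⟩⟩, ⟨hne, .inr (.inl rfl)⟩,
      ⟨hne, .inl ⟨b, a, rfl, rfl, hab.symm⟩⟩, ⟨hne, .inr (.inr rfl)⟩]
  · rintro ⟨hne, ⟨a, b, rfl, rfl, hab⟩ | rfl | rfl⟩
    exacts [⟨hne, .inl (.inl ⟨a, b, rfl, rfl, hab⟩)⟩, ⟨hne, .inl (.inr rfl)⟩,
      ⟨hne, .inr (.inr rfl)⟩]

@[simp] lemma extG_adj_inl_inl {a b : V} :
    (extG G).Adj (Sum.inl a) (Sum.inl b) ↔ G.Adj a b := by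
  simp only [extG_adj, ne_eq, Sum.inl.injEq, exists_and_left, exists_eq_left', inl_ne_hub,
    or_false, and_iff_right_iff_imp]
  exact G.ne_of_adj

lemma extG_adj_hub {y : ExtV V} (hy : y ≠ hub V) : (extG G).Adj (hub V) y :=
  extG_adj.mpr ⟨hy.symm, .inr (.inl rfl)⟩

lemma eq_hub_of_extG_adj_leaf {x : ExtV V} {ℓ : Fin (Fintype.card V + 2)}
    (h : (extG G).Adj x (leaf ℓ)) : x = hub V := by
  rcases extG_adj.mp h with ⟨-, ⟨a, b, -, hb, -⟩ | hx | hℓ⟩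
  · simp [leaf] at hb
  · exact hx
  · exact absurd hℓ (leaf_ne_hub ℓ)

@[simp] lemma map_inl_mem_edgeSet_extG {e : Sym2 V} :
    e.map Sum.inl ∈ (extG G).edgeSet ↔ e ∈ G.edgeSet := by
  induction e with
  | _ a b => simp

lemma extG_edge_cases {e : Sym2 (ExtV V)} (he : e ∈ (extG G).edgeSet) :
    (∃ e₀ : Sym2 V, e = e₀.map Sum.inl) ∨ ∃ x, e = s(hub V, x) := by
  induction e with
  | _ x y =>
    rcases extG_adj.mp he with ⟨-, ⟨a, b, rfl, rfl, -⟩ | rfl | rfl⟩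
    · exact .inl ⟨s(a, b), rfl⟩
    · exact .inr ⟨y, rfl⟩
    · exact .inr ⟨x, Sym2.eq_swap⟩

lemma eq_of_leaf_mem_extG_edge {e : Sym2 (ExtV V)} (he : e ∈ (extG G).edgeSet)
    {ℓ : Fin (Fintype.card V + 2)} (hℓ : leaf ℓ ∈ e) : e = s(hub V, leaf ℓ) := by
  rcases extG_edge_cases he with ⟨e₀, rfl⟩ | ⟨x, rfl⟩
  · obtain ⟨a, -, ha⟩ := Sym2.mem_map.mp hℓ
    simp [leaf] at ha
  · rcases Sym2.mem_iff.mp hℓ with h | rfl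
    · exact absurd h (leaf_ne_hub ℓ)
    · rfl

lemma extG_edge_at_inl {e : Sym2 (ExtV V)} (he : e ∈ (extG G).edgeSet) {c : V}
    (hc : Sum.inl c ∈ e) :
    (∃ e₀ : Sym2 V, c ∈ e₀ ∧ e = e₀.map Sum.inl) ∨ e = s(hub V, Sum.inl c) := by
  rcases extG_edge_cases he with ⟨e₀, rfl⟩ | ⟨x, rfl⟩
  · obtain ⟨a, ha, hac⟩ := Sym2.mem_map.mp hc
    exact .inl ⟨e₀, Sum.inl_injective hac ▸ ha, rfl⟩
  · rcases Sym2.mem_iff.mp hc with h | rfl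
    · exact absurd h (inl_ne_hub c)
    · exact .inr rfl

end

lemma mem_mVerts {M : Finset (Sym2 V)} {v : V} : v ∈ mVerts M ↔ ∃ e ∈ M, v ∈ e := by
  simp [mVerts]

variable {G : SimpleGraph V}

theorem IsEDS.exists_of_covers (M₁ : Finset (Sym2 V)) (A : Finset V)
    (hM₁ : ∀ e ∈ M₁, e ∈ G.edgeSet)
    (hcover : ∀ e ∈ G.edgeSet, ∃ v ∈ e, v ∈ A ∨ v ∈ mVerts M₁) :
    ∃ M, IsEDS G M ∧ M.card ≤ M₁.card + A.card := by
  classical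
  have hpick : ∀ a : V, ∃ f, (∃ e ∈ G.edgeSet, a ∈ e) → f ∈ G.edgeSet ∧ a ∈ f := by
    intro a
    by_cases h : ∃ e ∈ G.edgeSet, a ∈ e
    · obtain ⟨e, he, hae⟩ := h
      exact ⟨e, fun _ => ⟨he, hae⟩⟩
    · exact ⟨s(a, a), fun h' => absurd h' h⟩
  choose f hf using hpick
  set A' := A.filter fun a => ∃ e ∈ G.edgeSet, a ∈ e
  refine ⟨M₁ ∪ A'.image f, ⟨?_, ?_⟩, ?_⟩
  · intro e he
    rcases Finset.mem_union.mp he with he | he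
    · exact hM₁ e he
    · obtain ⟨a, ha, rfl⟩ := Finset.mem_image.mp he
      exact (hf a (Finset.mem_filter.mp ha).2).1
  · intro e he
    obtain ⟨v, hve, hvA | hvM⟩ := hcover e he
    · have hvA' : v ∈ A' := Finset.mem_filter.mpr ⟨hvA, e, he, hve⟩
      exact ⟨f v, Finset.mem_union_right _ (Finset.mem_image_of_mem f hvA'), v, hve,
        (hf v ⟨e, he, hve⟩).2⟩
    · obtain ⟨g, hg, hvg⟩ := (Finset.mem_filter.mp hvM).2
      exact ⟨g, Finset.mem_union_left _ hg, v, hve, hvg⟩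
  · calc (M₁ ∪ A'.image f).card ≤ M₁.card + (A'.image f).card := Finset.card_union_le _ _
      _ ≤ M₁.card + A.card := by
        gcongr
        exact Finset.card_image_le.trans (Finset.card_filter_le _ _)

theorem IsEDS.isMDS_extG {M : Finset (Sym2 V)} (hM : IsEDS G M) :
    IsMDS (extG G) {hub V} (M.image (Sym2.map Sum.inl)) := by
  refine ⟨?_, ?_, ?_⟩
  · intro e he
    obtain ⟨e₀, he₀, rfl⟩ := Finset.mem_image.mp he
    exact map_inl_mem_edgeSet_extG.mpr (hM.1 e₀ he₀)
  · intro v hv _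
    exact ⟨hub V, Finset.mem_singleton_self _, extG_adj_hub (by simpa using hv)⟩
  · intro e he _
    rcases extG_edge_cases he with ⟨e₀, rfl⟩ | ⟨x, rfl⟩
    · obtain ⟨f, hf, v, hve, hvf⟩ := hM.2 e₀ (map_inl_mem_edgeSet_extG.mp he)
      exact ⟨Sum.inl v, Sym2.mem_map.mpr ⟨v, hve, rfl⟩, .inr <| mem_mVerts.mpr
        ⟨f.map Sum.inl, Finset.mem_image_of_mem _ hf, Sym2.mem_map.mpr ⟨v, hvf, rfl⟩⟩⟩
    · exact ⟨hub V, Sym2.mem_mk_left _ _, .inl (Finset.mem_singleton_self _)⟩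

theorem IsMDS.card_le_of_hub_notMem {D : Finset (ExtV V)} {M' : Finset (Sym2 (ExtV V))}
    (h : IsMDS (extG G) D M') (hD : hub V ∉ D) :
    Fintype.card V + 2 ≤ D.card + M'.card := by
  have hleaf : ∀ ℓ, leaf ℓ ∈ D ∨ s(hub V, leaf ℓ) ∈ M' := by
    intro ℓ
    by_contra! ⟨hℓD, hℓM⟩
    by_cases hm : leaf ℓ ∈ mVerts M'
    · obtain ⟨e, he, hℓe⟩ := mem_mVerts.mp hm
      exact hℓM (eq_of_leaf_mem_extG_edge (h.1 e he) hℓe ▸ he)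
    · obtain ⟨d, hd, hadj⟩ := h.2.1 _ hℓD hm
      exact hD (eq_hub_of_extG_adj_leaf hadj ▸ hd)
  have hedge_inj : Function.Injective fun ℓ => s(hub V, leaf ℓ) :=
    fun ℓ ℓ' h => leaf_injective (Sym2.congr_right.mp h)
  calc Fintype.card V + 2 = (Finset.univ : Finset (Fin (Fintype.card V + 2))).card := by simp
    _ ≤ ((Finset.univ.filter fun ℓ => leaf ℓ ∈ D) ∪
          Finset.univ.filter fun ℓ => s(hub V, leaf ℓ) ∈ M').card :=
        Finset.card_le_card fun ℓ _ => by simpa using hleaf ℓ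
    _ ≤ D.card + M'.card :=
        (Finset.card_union_le _ _).trans <| add_le_add
          (card_filter_comp_mem_le leaf_injective D) (card_filter_comp_mem_le hedge_inj M')

theorem IsMDS.exists_isEDS_of_hub_mem {D : Finset (ExtV V)} {M' : Finset (Sym2 (ExtV V))}
    (h : IsMDS (extG G) D M') (hD : hub V ∈ D) :
    ∃ M, IsEDS G M ∧ M.card + 1 ≤ D.card + M'.card := by
  set M₁ := Finset.univ.filter fun e : Sym2 V => e.map Sum.inl ∈ M'
  set A_D := Finset.univ.filter fun a : V => Sum.inl a ∈ D.erase (hub V)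
  set A_M := Finset.univ.filter fun a : V => s(hub V, Sum.inl a) ∈ M'
  have hM₁ : ∀ e ∈ M₁, e ∈ G.edgeSet := fun e he =>
    map_inl_mem_edgeSet_extG.mp (h.1 _ (Finset.mem_filter.mp he).2)
  have hcover_inl : ∀ c : V, Sum.inl c ∈ D ∨ Sum.inl c ∈ mVerts M' →
      c ∈ A_D ∪ A_M ∨ c ∈ mVerts M₁ := by
    rintro c (hcD | hcM)
    · exact .inl (Finset.mem_union_left _ (by simpa [A_D] using hcD))
    · obtain ⟨e', he', hce'⟩ := mem_mVerts.mp hcM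
      rcases extG_edge_at_inl (h.1 e' he') hce' with ⟨e₀, hce₀, rfl⟩ | rfl
      · exact .inr (mem_mVerts.mpr ⟨e₀, by simpa [M₁] using he', hce₀⟩)
      · exact .inl (Finset.mem_union_right _ (by simpa [A_M] using he'))
  have hcover : ∀ e ∈ G.edgeSet, ∃ v ∈ e, v ∈ A_D ∪ A_M ∨ v ∈ mVerts M₁ := by
    intro e he
    by_cases hm : e.map Sum.inl ∈ M'
    · induction e with
      | _ a b =>
        exact ⟨a, Sym2.mem_mk_left _ _, .inr (mem_mVerts.mpr
          ⟨s(a, b), by simpa [M₁] using hm, Sym2.mem_mk_left _ _⟩)⟩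
    · obtain ⟨x, hx, hxD⟩ := h.2.2 _ (map_inl_mem_edgeSet_extG.mpr he) hm
      obtain ⟨c, hc, rfl⟩ := Sym2.mem_map.mp hx
      exact ⟨c, hc, hcover_inl c hxD⟩
  obtain ⟨M, hM, hMcard⟩ := IsEDS.exists_of_covers M₁ (A_D ∪ A_M) hM₁ hcover
  have hA_D : A_D.card + 1 ≤ D.card :=
    calc A_D.card + 1 ≤ (D.erase (hub V)).card + 1 := by
          gcongr; exact card_filter_comp_mem_le Sum.inl_injective _
      _ = D.card := Finset.card_erase_add_one hD
  have hM₁A_M : M₁.card + A_M.card ≤ M'.card := by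
    have hinj : Function.Injective
        (Sum.elim (Sym2.map Sum.inl) fun a : V => s(hub V, Sum.inl a)) := by
      refine (Sym2.map.injective Sum.inl_injective).sumElim
        (fun a b hab => Sum.inl_injective (Sym2.congr_right.mp hab)) ?_
      intro e a he
      have : hub V ∈ e.map Sum.inl := he ▸ Sym2.mem_mk_left _ _
      obtain ⟨b, -, hb⟩ := Sym2.mem_map.mp this
      exact inl_ne_hub b hb
    rw [← Finset.card_disjSum]
    exact Finset.card_le_card_of_injOn _
      (by rintro (e | a) hx <;> simpa [M₁, A_M] using hx) hinj.injOn
  refine ⟨M, hM, ?_⟩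
  have := Finset.card_union_le A_D A_M
  omega

theorem IsEDS.exists_card_le_card (G : SimpleGraph V) :
    ∃ M, IsEDS G M ∧ M.card ≤ Fintype.card V := by
  obtain ⟨M, hM, hcard⟩ := IsEDS.exists_of_covers (G := G) ∅ Finset.univ (by simp) fun e _ => by
    induction e with
    | _ a b => exact ⟨a, Sym2.mem_mk_left _ _, .inl (Finset.mem_univ a)⟩
  exact ⟨M, hM, by simpa using hcard⟩

/-- `G` has an edge dominating set of size `k` iff `G'` (universal vertex `u` plus
`|V| + 2` leaves on `u`) has a mixed dominating set of size `k + 1`. -/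
theorem stmt14 (G : SimpleGraph V) (k : ℕ) :
    (∃ M : Finset (Sym2 V), IsEDS G M ∧ M.card ≤ k) ↔
    (∃ (D : Finset (V ⊕ (Unit ⊕ Fin (Fintype.card V + 2))))
       (M' : Finset (Sym2 (V ⊕ (Unit ⊕ Fin (Fintype.card V + 2))))),
      IsMDS (extG G) D M' ∧ D.card + M'.card ≤ k + 1) := by
  constructor
  · rintro ⟨M, hM, hk⟩
    refine ⟨{hub V}, _, hM.isMDS_extG, ?_⟩
    have := Finset.card_image_le (s := M) (f := Sym2.map (Sum.inl : V → ExtV V))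
    rw [Finset.card_singleton]
    omega
  · rintro ⟨D, M', hMDS, hk⟩
    by_cases hV : Fintype.card V ≤ k
    · obtain ⟨M, hM, hcard⟩ := IsEDS.exists_card_le_card G
      exact ⟨M, hM, hcard.trans hV⟩
    by_cases hD : hub V ∈ D
    · obtain ⟨M, hM, hcard⟩ := hMDS.exists_isEDS_of_hub_mem hD
      exact ⟨M, hM, by omega⟩
    · have := hMDS.card_le_of_hub_notMem hD
      omega
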